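/- arXiv:2402.15916 — 7 statements merged into one kernel-verified Lean document; each statement's English description precedes it below -/
import Mathlib

section
/- Let G be a finite group and x ∈ G. Then the cardinality of nil_G(x) is divisible by the order of x. -/
/-- The nilpotentizer of `x` in `G`: the set of `y` such that `⟨x, y⟩` is nilpotent. -/
def nilpotentizer {G : Type*} [Group G] (x : G) : Set G :=
  {y | Group.IsNilpotent (Subgroup.closure ({x, y} : Set G))}

lemma closure_pair_mul {G : Type*} [Group G] (x z y : G)
    (hz : z ∈ Subgroup.zpowers x) :
    Subgroup.closure ({x, z * y} : Set G) = Subgroup.closure ({x, y} : Set G) := by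
  have hz1 : z ∈ Subgroup.closure ({x, y} : Set G) := by
    obtain ⟨k, rfl⟩ := hz
    exact zpow_mem (Subgroup.subset_closure (by simp)) k
  have hz2 : z ∈ Subgroup.closure ({x, z * y} : Set G) := by
    obtain ⟨k, rfl⟩ := hz
    exact zpow_mem (Subgroup.subset_closure (by simp)) k
  apply le_antisymm <;> rw [Subgroup.closure_le] <;> rintro a (rfl | rfl)
  · exact Subgroup.subset_closure (by simp)
  · exact mul_mem hz1 (Subgroup.subset_closure (by simp))
  · exact Subgroup.subset_closure (by simp)
  · have := mul_mem (inv_mem hz2) (Subgroup.subset_closure (show z * a ∈ _ by simp))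
    simpa using this

theorem stmt_2 {G : Type*} [Group G] [Finite G] (x : G) :
    orderOf x ∣ Nat.card (nilpotentizer x) := by
  classical
  set H := Subgroup.zpowers x with hH
  set S := nilpotentizer x with hS
  -- action of H on S by left multiplication
  have smul_mem : ∀ (h : H) (y : G), y ∈ S → (h : G) * y ∈ S := by
    intro h y hy
    simp only [hS, nilpotentizer, Set.mem_setOf_eq] at hy ⊢
    rwa [closure_pair_mul x h y h.2]
  letI : MulAction H S :=
    { smul := fun h y => ⟨(h : G) * y, smul_mem h y y.2⟩
      one_smul := fun y => by ext; simp [HSMul.hSMul]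
      mul_smul := fun a b y => by ext; simp [HSMul.hSMul, mul_assoc] }
  have smul_def : ∀ (h : H) (y : S), ((h • y : S) : G) = (h : G) * y := fun _ _ => rfl
  have stab_bot : ∀ y : S, MulAction.stabilizer H y = ⊥ := by
    intro y
    rw [eq_bot_iff]
    intro h hh
    have : (h : G) * (y : G) = (y : G) := by
      have := Subtype.ext_iff.mp (hh : h • y = y)
      simpa [smul_def] using this
    have : (h : G) = 1 := mul_right_cancel (this.trans (one_mul (y : G)).symm)
    simpa [Subgroup.mem_bot] using Subtype.ext this
  have e : S ≃ (MulAction.orbitRel.Quotient H S) × H := by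
    refine (MulAction.selfEquivSigmaOrbitsQuotientStabilizer H S).trans ?_
    refine (Equiv.sigmaCongrRight fun ω => ?_).trans (Equiv.sigmaEquivProd _ _)
    rw [stab_bot]
    exact QuotientGroup.quotientBot.toEquiv
  rw [Nat.card_congr e, Nat.card_prod]
  have : Nat.card H = orderOf x := (Nat.card_zpowers x)
  rw [this]
  exact dvd_mul_left _ _
end

section
/- Let G be a finite group, x ∈ G, and K a normal subgroup of G contained in the hypercenter of G (i.e., K ≤ upperCentralSeries(G, n) for some n). Then nil_{G/K}(xK), the nilpotentizer of the coset xK in the quotient group G/K, is equal to the image of nil_G(x) under the canonical projection G → G/K. -/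
/-!
If `ker f ≤ ζₙ(G)`, then the preimage under `f` of `ζₘ(Q)` lies in `ζₙ₊ₘ(G)`, because `f` maps
commutators to commutators. Hence `G` is nilpotent as soon as `f(G)` is, and applying this to the
restriction of `G → G/K` to `⟨x, y⟩` (whose kernel `K ∩ ⟨x, y⟩` lies in the hypercenter of
`⟨x, y⟩` by the same bound for the inclusion) shows that `⟨x, y⟩` is nilpotent if and only if
`⟨xK, yK⟩` is.
-/

namespace MonoidHom

open scoped commutatorElement

variable {G Q : Type*} [Group G] [Group Q]

theorem comap_upperCentralSeries_le_add {f : G →* Q} {n : ℕ}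
    (hf : f.ker ≤ Subgroup.upperCentralSeries G n) :
    ∀ m, (Subgroup.upperCentralSeries Q m).comap f ≤ Subgroup.upperCentralSeries G (n + m)
  | 0 => by simpa [comap_bot] using hf
  | m + 1 => fun g hg h => by
    have hgh : f ⁅g, h⁆ ∈ Subgroup.upperCentralSeries Q m := by
      simpa only [map_commutatorElement] using Subgroup.mem_upperCentralSeries_succ_iff.mp hg (f h)
    exact comap_upperCentralSeries_le_add hf m hgh

theorem isNilpotent_of_ker_le_upperCentralSeries (f : G →* Q) {n : ℕ}
    (hf : f.ker ≤ Subgroup.upperCentralSeries G n) [hQ : Group.IsNilpotent Q] :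
    Group.IsNilpotent G := by
  obtain ⟨m, hm⟩ := hQ.nilpotent
  refine ⟨n + m, eq_top_iff.mpr ?_⟩
  simpa [hm] using comap_upperCentralSeries_le_add hf m

theorem isNilpotent_range_iff (f : G →* Q) {n : ℕ} (hf : f.ker ≤ Subgroup.upperCentralSeries G n) :
    Group.IsNilpotent f.range ↔ Group.IsNilpotent G :=
  ⟨fun _ ↦ isNilpotent_of_ker_le_upperCentralSeries f.rangeRestrict (by rwa [ker_rangeRestrict]),
    fun _ ↦ Group.nilpotent_of_surjective _ f.rangeRestrict_surjective⟩

theorem ker_comp_subtype_le_upperCentralSeries (f : G →* Q) {n : ℕ}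
    (hf : f.ker ≤ Subgroup.upperCentralSeries G n) (H : Subgroup G) :
    (f.comp H.subtype).ker ≤ Subgroup.upperCentralSeries H n := by
  calc (f.comp H.subtype).ker = f.ker.comap H.subtype := (comap_ker _ _).symm
    _ ≤ (Subgroup.upperCentralSeries G n).comap H.subtype := Subgroup.comap_mono hf
    _ ≤ Subgroup.upperCentralSeries H n := by
      simpa only [zero_add] using comap_upperCentralSeries_le_add (n := 0) (by simp) n

theorem map_mem_nilpotentizer_iff (f : G →* Q) {n : ℕ}
    (hf : f.ker ≤ Subgroup.upperCentralSeries G n) (x y : G) :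
    f y ∈ nilpotentizer (f x) ↔ y ∈ nilpotentizer x := by
  have hrange : Subgroup.closure ({f x, f y} : Set Q) =
      (f.comp (Subgroup.closure {x, y}).subtype).range := by
    rw [range_comp, Subgroup.range_subtype, map_closure, Set.image_pair]
  change Group.IsNilpotent _ ↔ Group.IsNilpotent _
  rw [hrange]
  exact isNilpotent_range_iff _ (ker_comp_subtype_le_upperCentralSeries f hf _)

end MonoidHom

theorem stmt_4_general {G : Type*} [Group G] (x : G) (K : Subgroup G) [K.Normal]
    (hK : ∃ n : ℕ, K ≤ upperCentralSeries G n) :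
    nilpotentizer ((x : G ⧸ K)) =
      (QuotientGroup.mk : G → G ⧸ K) '' nilpotentizer x := by
  obtain ⟨n, hKn⟩ := hK
  have hpre : QuotientGroup.mk ⁻¹' nilpotentizer (x : G ⧸ K) = nilpotentizer x :=
    Set.ext fun y ↦ (QuotientGroup.mk' K).map_mem_nilpotentizer_iff
      (by rwa [QuotientGroup.ker_mk']) x y
  rw [← hpre, Set.image_preimage_eq _ QuotientGroup.mk_surjective]

theorem stmt_4 {G : Type*} [Group G] [Finite G] (x : G) (K : Subgroup G) [K.Normal]
    (hK : ∃ n : ℕ, K ≤ upperCentralSeries G n) :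
    nilpotentizer ((x : G ⧸ K)) =
      (QuotientGroup.mk : G → G ⧸ K) '' nilpotentizer x :=
  stmt_4_general x K hK
end

section
/- Let G be a finite group and let H and K be subgroups of G such that G = HK and [H, K] = 1 (every element of H commutes with every element of K). If x ∈ H, then nil_G(x) = K · nil_H(x), the set of all products k·h with k ∈ K and h ∈ nil_H(x). -/
/-- The nilpotentizer of `x` in the subgroup `H`: the set of `h ∈ H` such that
`⟨x, h⟩` is nilpotent. -/
def nilpotentizerIn {G : Type*} [Group G] (H : Subgroup G) (x : G) : Set G :=
  {h | h ∈ H ∧ Group.IsNilpotent (Subgroup.closure ({x, h} : Set G))}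

private lemma nilp_of_le {G : Type*} [Group G] {A B : Subgroup G} (hAB : A ≤ B)
    (hB : Group.IsNilpotent B) : Group.IsNilpotent A := by
  letI := hB
  exact nilpotent_of_mulEquiv (Subgroup.subgroupOfEquivOfLe hAB)

private lemma key {G : Type*} [Group G] (x h k : G) (h1 : Commute k x) (h2 : Commute k h)
    (hn : Group.IsNilpotent (Subgroup.closure ({x, h} : Set G))) :
    Group.IsNilpotent (Subgroup.closure ({x, k * h} : Set G)) := by
  set N1 : Subgroup G := Subgroup.closure ({x, h} : Set G) with hN1
  set N2 : Subgroup G := Subgroup.closure ({k} : Set G) with hN2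
  have hcomm : ∀ a ∈ N1, Commute k a := by
    intro a ha
    refine Subgroup.closure_induction ?_ (Commute.one_right k) ?_ ?_ ha
    · rintro g (rfl | rfl)
      · exact h1
      · exact h2
    · intro a b _ _ ca cb; exact ca.mul_right cb
    · intro a _ ca; exact ca.inv_right
  have hcomm2 : ∀ (m : N1) (n : N2), Commute (N1.subtype m) (N2.subtype n) := by
    rintro ⟨a, ha⟩ ⟨b, hb⟩
    have : Commute b a := by
      refine Subgroup.closure_induction ?_ (Commute.one_left a) ?_ ?_ hb
      · rintro g rfl; exact hcomm a ha
      · intro c d _ _ cc cd; exact cc.mul_left cd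
      · intro c _ cc; exact cc.inv_left
    simpa using this.symm
  let φ : (N1 × N2) →* G := (N1.subtype).noncommCoprod (N2.subtype) hcomm2
  haveI : Group.IsNilpotent N1 := hn
  haveI : Group.IsNilpotent N2 := by
    have : ∀ a b : N2, a * b = b * a := by
      rintro ⟨a, ha⟩ ⟨b, hb⟩
      have hza : a ∈ Subgroup.zpowers k := by
        rwa [Subgroup.zpowers_eq_closure]
      have hzb : b ∈ Subgroup.zpowers k := by
        rwa [Subgroup.zpowers_eq_closure]
      obtain ⟨m, rfl⟩ := hza
      obtain ⟨n, rfl⟩ := hzb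
      ext
      exact (Commute.zpow_zpow_self k m n)
    letI : CommGroup N2 := { mul_comm := this }
    infer_instance
  have hnil_range : Group.IsNilpotent φ.range :=
    nilpotent_of_surjective φ.rangeRestrict φ.rangeRestrict_surjective
  have hle : Subgroup.closure ({x, k * h} : Set G) ≤ φ.range := by
    rw [Subgroup.closure_le]
    rintro g (rfl | rfl)
    · exact ⟨(⟨g, Subgroup.subset_closure (by simp)⟩, 1), by simp [φ]⟩
    · refine ⟨(⟨h, Subgroup.subset_closure (by simp)⟩,
        ⟨k, Subgroup.subset_closure (by simp)⟩), ?_⟩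
      simp only [φ, MonoidHom.noncommCoprod_apply, Subgroup.coe_subtype]
      exact h2.symm.eq
  exact nilp_of_le hle hnil_range

open Pointwise in
theorem stmt_5 {G : Type*} [Group G] [Finite G] (H K : Subgroup G)
    (hHK : ∀ g : G, ∃ h ∈ H, ∃ k ∈ K, g = h * k)
    (hcomm : ∀ h ∈ H, ∀ k ∈ K, h * k = k * h)
    (x : G) (hx : x ∈ H) :
    nilpotentizer x = (K : Set G) * nilpotentizerIn H x := by
  ext y
  constructor
  · intro hy
    obtain ⟨h, hh, k, hk, hyhk⟩ := hHK y
    have ckx : Commute k x := ((hcomm x hx k hk)).symm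
    have ckh : Commute k h := (hcomm h hh k hk).symm
    have hy' : y = k * h := by rw [hyhk]; exact ckh.symm.eq
    have cinvx : Commute k⁻¹ x := ckx.inv_left
    have cinvy : Commute k⁻¹ y := by
      rw [hy']
      exact ((Commute.refl k).mul_right ckh).inv_left
    have := key x y k⁻¹ cinvx cinvy hy
    have heq : k⁻¹ * y = h := by rw [hy', inv_mul_cancel_left]
    rw [heq] at this
    exact ⟨k, hk, h, ⟨hh, this⟩, hy'.symm⟩
  · rintro ⟨k, hk, h, ⟨hh, hnil⟩, rfl⟩
    exact key x h k ((hcomm x hx k hk)).symm ((hcomm h hh k hk)).symm hnil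
end

section
/- Let G be a finite group and let H and K be subgroups of G such that G = HK and [H, K] = 1 (every element of H commutes with every element of K). If x ∈ H and H is nilpotent, then nil_G(x) = G. -/
namespace Subgroup

variable {G : Type*} [Group G]

theorem isNilpotent_of_le {S T : Subgroup G} (hST : S ≤ T) [Group.IsNilpotent T] :
    Group.IsNilpotent S :=
  Group.nilpotent_of_surjective (subgroupOfEquivOfLe hST).toMonoidHom
    (subgroupOfEquivOfLe hST).surjective

theorem isNilpotent_sup_of_commute {A B : Subgroup G} [Group.IsNilpotent A]
    [Group.IsNilpotent B] (hAB : ∀ a ∈ A, ∀ b ∈ B, Commute a b) :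
    Group.IsNilpotent (A ⊔ B : Subgroup G) := by
  let φ := MonoidHom.noncommCoprod A.subtype B.subtype fun a b ↦ hAB a a.2 b b.2
  have hφ : φ.range = A ⊔ B :=
    (MonoidHom.noncommCoprod_range ..).trans <| by rw [range_subtype, range_subtype]
  rw [← hφ]
  exact Group.nilpotent_of_surjective φ.rangeRestrict φ.rangeRestrict_surjective

theorem isNilpotent_sup_zpowers_of_commute {H : Subgroup G} [Group.IsNilpotent H] {k : G}
    (hk : ∀ h ∈ H, Commute h k) : Group.IsNilpotent (H ⊔ zpowers k : Subgroup G) := by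
  have : Group.IsNilpotent (zpowers k) := by
    open scoped IsMulCommutative in infer_instance
  refine isNilpotent_sup_of_commute fun h hh b hb ↦ ?_
  obtain ⟨n, rfl⟩ := mem_zpowers_iff.1 hb
  exact (hk h hh).zpow_right n

end Subgroup

theorem stmt_6_general {G : Type*} [Group G] (H K : Subgroup G)
    (hHK : ∀ g : G, ∃ h ∈ H, ∃ k ∈ K, g = h * k)
    (hcomm : ∀ h ∈ H, ∀ k ∈ K, h * k = k * h)
    (x : G) (hx : x ∈ H) (hH : Group.IsNilpotent H) :
    nilpotentizer x = (Set.univ : Set G) := by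
  refine Set.eq_univ_of_forall fun y ↦ ?_
  obtain ⟨h, hh, k, hk, rfl⟩ := hHK y
  have := Subgroup.isNilpotent_sup_zpowers_of_commute fun h' hh' ↦ hcomm h' hh' k hk
  have hle : Subgroup.closure {x, h * k} ≤ H ⊔ Subgroup.zpowers k := by
    rw [Subgroup.closure_le]
    rintro _ (rfl | rfl)
    · exact Subgroup.mem_sup_left hx
    · exact mul_mem (Subgroup.mem_sup_left hh) (Subgroup.mem_sup_right (Subgroup.mem_zpowers k))
  exact Subgroup.isNilpotent_of_le hle

theorem stmt_6 {G : Type*} [Group G] [Finite G] (H K : Subgroup G)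
    (hHK : ∀ g : G, ∃ h ∈ H, ∃ k ∈ K, g = h * k)
    (hcomm : ∀ h ∈ H, ∀ k ∈ K, h * k = k * h)
    (x : G) (hx : x ∈ H) (hH : Group.IsNilpotent H) :
    nilpotentizer x = (Set.univ : Set G) :=
  stmt_6_general H K hHK hcomm x hx hH
end

section
/- Let G be a finite group, x ∈ G, and n ≥ 2. Suppose that every left-normed simple commutator of weight n with entries in nil_G(x) is trivial, i.e., [l₁, l₂, …, lₙ] = 1 for all l₁, …, lₙ ∈ nil_G(x), where [a₁] = a₁ and [a₁, …, aₖ] = [[a₁, …, a_{k−1}], aₖ]. Then nil_G(x) is (the underlying set of) a subgroup of G; moreover, this subgroup is nilpotent of nilpotency class at most n − 1 and is a maximal nilpotent subgroup of G (maximal among nilpotent subgroups of G with respect to inclusion). -/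
/-- The left-normed simple commutator `[a₁, …, a_{n+1}]` of weight `n + 1`,
where `[a] = a` and `[a₁, …, aₖ] = [[a₁, …, a_{k-1}], aₖ]` with
`[a, b] = a⁻¹ * b⁻¹ * a * b`. -/
def leftNormedCommutator {G : Type*} [Group G] : ∀ n : ℕ, (Fin (n + 1) → G) → G
  | 0, f => f 0
  | n + 1, f =>
      (leftNormedCommutator n (f ∘ Fin.castSucc))⁻¹ * (f (Fin.last (n + 1)))⁻¹ *
        leftNormedCommutator n (f ∘ Fin.castSucc) * f (Fin.last (n + 1))

section LeftNormedCommutator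

variable {G : Type*} [Group G]

lemma map_leftNormedCommutator {H : Type*} [Group H] (φ : G →* H) :
    ∀ (n : ℕ) (f : Fin (n + 1) → G),
      φ (leftNormedCommutator n f) = leftNormedCommutator n (φ ∘ f)
  | 0, _ => rfl
  | n + 1, f => by
    simp only [leftNormedCommutator, map_mul, map_inv, map_leftNormedCommutator φ n]
    rfl

-- Mathlib's commutator is `⁅a, b⁆ = a * b * a⁻¹ * b⁻¹`, so `[a, b] = ⁅a⁻¹, b⁻¹⁆`.
lemma leftNormedCommutator_snoc_eq_one_iff {k : ℕ} (f : Fin (k + 1) → G) (s : G) :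
    leftNormedCommutator (k + 1) (Fin.snoc f s) = 1 ↔ Commute (leftNormedCommutator k f) s := by
  rw [← Commute.inv_inv_iff, ← commutatorElement_eq_one_iff_commute, commutatorElement_def,
    inv_inv, inv_inv]
  simp only [leftNormedCommutator, Fin.snoc_comp_castSucc, Fin.snoc_last]

def leftNormedCommutatorSet (S : Set G) (k : ℕ) : Set G :=
  {g | ∃ f : Fin (k + 1) → G, (∀ i, f i ∈ S) ∧ leftNormedCommutator k f = g}

lemma snoc_mem_leftNormedCommutatorSet {S : Set G} {k : ℕ} {f : Fin (k + 1) → G}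
    (hf : ∀ i, f i ∈ S) {s : G} (hs : s ∈ S) :
    leftNormedCommutator (k + 1) (Fin.snoc f s) ∈ leftNormedCommutatorSet S (k + 1) :=
  ⟨Fin.snoc f s, Fin.lastCases (by simpa using hs) (by simpa using hf), rfl⟩

end LeftNormedCommutator

namespace Subgroup

variable {G : Type*} [Group G] {S : Set G}

lemma center_eq_centralizer_of_closure_eq_top (hS : closure S = ⊤) :
    center G = centralizer S := by
  rw [← centralizer_univ, ← coe_top, ← hS, centralizer_closure]

lemma commutator_normalClosure_leftNormedCommutatorSet_le (hS : closure S = ⊤) (k : ℕ) :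
    ⁅normalClosure (leftNormedCommutatorSet S k), ⊤⁆ ≤
      normalClosure (leftNormedCommutatorSet S (k + 1)) := by
  set M := normalClosure (leftNormedCommutatorSet S (k + 1))
  set π := QuotientGroup.mk' M
  have hgen : closure (π '' S) = ⊤ := by
    rw [← MonoidHom.map_closure, hS, map_top_of_surjective _ (QuotientGroup.mk'_surjective M)]
  have hcentral : normalClosure (leftNormedCommutatorSet S k) ≤ (center (G ⧸ M)).comap π := by
    refine normalClosure_le_normal ?_
    rintro _ ⟨f, hf, rfl⟩
    rw [SetLike.mem_coe, mem_comap, center_eq_centralizer_of_closure_eq_top hgen]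
    rintro _ ⟨s, hs, rfl⟩
    have hM : π (leftNormedCommutator (k + 1) (Fin.snoc f s)) = 1 :=
      (QuotientGroup.eq_one_iff _).mpr <|
        subset_normalClosure (snoc_mem_leftNormedCommutatorSet hf hs)
    rw [map_leftNormedCommutator, Fin.comp_snoc, leftNormedCommutator_snoc_eq_one_iff,
      ← map_leftNormedCommutator] at hM
    exact hM.symm.eq
  rw [commutator_le]
  intro g hg y _
  have hg' : g ∈ upperCentralSeriesStep M := by
    rw [upperCentralSeriesStep_eq_comap_center]
    exact hcentral hg
  exact (mem_upperCentralSeriesStep M g).mp hg' y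

lemma lowerCentralSeries_le_normalClosure_leftNormedCommutatorSet (hS : closure S = ⊤) :
    ∀ k : ℕ,
      (⊤ : Subgroup G).lowerCentralSeries k ≤ normalClosure (leftNormedCommutatorSet S k)
  | 0 => by
    rw [lowerCentralSeries_zero, ← hS, closure_le]
    exact fun s hs => subset_normalClosure ⟨fun _ => s, fun _ => hs, rfl⟩
  | k + 1 => (commutator_mono (lowerCentralSeries_le_normalClosure_leftNormedCommutatorSet hS k)
      le_rfl).trans (commutator_normalClosure_leftNormedCommutatorSet_le hS k)

lemma lowerCentralSeries_eq_bot_of_leftNormedCommutator_eq_one (hS : closure S = ⊤) {m : ℕ}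
    (h : ∀ f : Fin (m + 1) → G, (∀ i, f i ∈ S) → leftNormedCommutator m f = 1) :
    (⊤ : Subgroup G).lowerCentralSeries m = ⊥ := by
  refine le_bot_iff.mp ((lowerCentralSeries_le_normalClosure_leftNormedCommutatorSet hS m).trans ?_)
  refine normalClosure_le_normal ?_
  rintro _ ⟨f, hf, rfl⟩
  exact mem_bot.mpr (h f hf)

lemma lowerCentralSeries_closure_eq_bot {m : ℕ}
    (h : ∀ f : Fin (m + 1) → G, (∀ i, f i ∈ S) → leftNormedCommutator m f = 1) :
    (⊤ : Subgroup (closure S)).lowerCentralSeries m = ⊥ :=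
  lowerCentralSeries_eq_bot_of_leftNormedCommutator_eq_one closure_closure_coe_preimage
    fun f hf => Subtype.ext <| (map_leftNormedCommutator (closure S).subtype m f).trans (h _ hf)

lemma isNilpotent_of_le_s7 {H K : Subgroup G} (hle : K ≤ H) [Group.IsNilpotent H] :
    Group.IsNilpotent K :=
  (Group.isNilpotent_congr (subgroupOfEquivOfLe hle)).mp inferInstance

end Subgroup

section Nilpotentizer

variable {G : Type*} [Group G]

lemma self_mem_nilpotentizer (x : G) : x ∈ nilpotentizer x := by
  change Group.IsNilpotent (Subgroup.closure {x, x})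
  rw [Set.pair_eq_singleton, ← Subgroup.zpowers_eq_closure]
  exact Subgroup.nilpotent_iff_lowerCentralSeries.mpr
    ⟨1, Subgroup.lowerCentralSeries_one_eq_bot_iff.mpr inferInstance⟩

lemma mem_nilpotentizer_of_mem {x y : G} {K : Subgroup G} [Group.IsNilpotent K] (hx : x ∈ K)
    (hy : y ∈ K) : y ∈ nilpotentizer x :=
  Subgroup.isNilpotent_of_le_s7 (Subgroup.closure_le K |>.mpr (Set.pair_subset hx hy))

end Nilpotentizer

theorem stmt_7_general {G : Type*} [Group G] (x : G) (n : ℕ)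
    (h : ∀ f : Fin (n - 1 + 1) → G, (∀ i, f i ∈ nilpotentizer x) →
      leftNormedCommutator (n - 1) f = 1) :
    ∃ H : Subgroup G, (H : Set G) = nilpotentizer x ∧
      ∃ hN : Group.IsNilpotent H, Group.nilpotencyClass H ≤ n - 1 ∧
        ∀ K : Subgroup G, Group.IsNilpotent K → H ≤ K → H = K := by
  set H := Subgroup.closure (nilpotentizer x)
  have hγ : (⊤ : Subgroup H).lowerCentralSeries (n - 1) = ⊥ :=
    Subgroup.lowerCentralSeries_closure_eq_bot h
  have hH : Group.IsNilpotent H := Subgroup.nilpotent_iff_lowerCentralSeries.mpr ⟨_, hγ⟩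
  have hxH : x ∈ H := Subgroup.subset_closure (self_mem_nilpotentizer x)
  refine ⟨H, Subgroup.subset_closure.antisymm' fun y hy => mem_nilpotentizer_of_mem hxH hy,
    hH, Subgroup.lowerCentralSeries_eq_bot_iff_nilpotencyClass_le.mp hγ, fun K hK hHK => ?_⟩
  exact hHK.antisymm fun y hy => Subgroup.subset_closure (mem_nilpotentizer_of_mem (hHK hxH) hy)

theorem stmt_7 {G : Type*} [Group G] [Finite G] (x : G) (n : ℕ) (hn : 2 ≤ n)
    (h : ∀ f : Fin (n - 1 + 1) → G, (∀ i, f i ∈ nilpotentizer x) →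
      leftNormedCommutator (n - 1) f = 1) :
    ∃ H : Subgroup G, (H : Set G) = nilpotentizer x ∧
      ∃ hN : Group.IsNilpotent H, Group.nilpotencyClass H ≤ n - 1 ∧
        ∀ K : Subgroup G, Group.IsNilpotent K → H ≤ K → H = K :=
  stmt_7_general x n h
end

section
/- Let G be a finite non-solvable group and x ∈ G such that the subgroup generated by nil_G(x) is a maximal subgroup of G. Then the cardinality of nil_G(x) is not equal to p and not equal to p² for any prime p. -/
open Subgroup
open scoped IsMulCommutative Pointwise

section GroupTheory

variable {G : Type*} [Group G]

theorem Subgroup.isNilpotent_of_le_s10 {H K : Subgroup G} (hle : H ≤ K) [Group.IsNilpotent K] :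
    Group.IsNilpotent H :=
  Group.nilpotent_of_mulEquiv (subgroupOfEquivOfLe hle)

theorem Subgroup.card_dvd_natCard_of_mul_mem (H : Subgroup G) {S : Set G}
    (hS : ∀ s ∈ S, ∀ h ∈ H, s * h ∈ S) : Nat.card H ∣ Nat.card S := by
  have hS : S = QuotientGroup.mk ⁻¹' (QuotientGroup.mk '' S : Set (G ⧸ H)) := by
    refine (Set.subset_preimage_image _ _).antisymm ?_
    rintro z ⟨s, hs, hsz⟩
    simpa using hS s hs _ (QuotientGroup.eq.mp hsz)
  rw [hS, Nat.card_congr (QuotientGroup.preimageMkEquivSubgroupProdSet H _), Nat.card_prod]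
  exact dvd_mul_right _ _

theorem Subgroup.card_sup_le_of_le_normalizer {N H : Subgroup G}
    (hH : H ≤ normalizer (N : Set G)) : Nat.card ↥(N ⊔ H) ≤ Nat.card N * Nat.card H := by
  have h := coe_mul_of_right_le_normalizer_left N H hH
  calc Nat.card ↥(N ⊔ H) = Nat.card ((N : Set G) * (H : Set G)) := by rw [← h]; rfl
    _ ≤ Nat.card N * Nat.card H := Set.natCard_mul_le

theorem isMulCommutative_of_card_eq_prime_pow_of_le_two {p k : ℕ} [Fact p.Prime]
    (hG : Nat.card G = p ^ k) (hk : k ≤ 2) : IsMulCommutative G := by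
  interval_cases k
  · have : Subsingleton G := (Nat.card_eq_one_iff_unique.mp hG).1
    exact ⟨⟨fun a b => Subsingleton.elim _ _⟩⟩
  · have : IsCyclic G := isCyclic_of_prime_card (hG.trans (pow_one p))
    infer_instance
  · exact IsPGroup.isMulCommutative_of_card_eq_prime_sq hG

theorem Subgroup.eq_top_of_forall_exists_sylow_le [Finite G] {H : Subgroup G}
    (h : ∀ (q : ℕ) [Fact q.Prime], ∃ Q : Sylow q G, (Q : Subgroup G) ≤ H) : H = ⊤ := by
  refine index_eq_one.mp (Nat.eq_one_iff_not_exists_prime_dvd.mpr fun q hq hdvd => ?_)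
  have : Fact q.Prime := ⟨hq⟩
  obtain ⟨Q, hQ⟩ := h q
  exact Q.not_dvd_index (hdvd.trans (index_dvd_of_le hQ))

theorem Sylow.le_center_of_isNilpotent [Finite G] [Group.IsNilpotent G] {p : ℕ} [Fact p.Prime]
    (P : Sylow p G) [IsMulCommutative P] : (P : Subgroup G) ≤ center G := by
  rw [← SetLike.coe_subset_coe, ← centralizer_eq_top_iff_subset]
  refine eq_top_of_forall_exists_sylow_le fun q _ => ?_
  by_cases hqp : q = p
  · subst hqp
    exact ⟨P, le_centralizer (P : Subgroup G)⟩
  · obtain ⟨Q⟩ : Nonempty (Sylow q G) := inferInstance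
    refine ⟨Q, fun g hg h hh => ?_⟩
    exact commute_of_normal_of_disjoint _ _ inferInstance inferInstance
      (IsPGroup.disjoint_of_ne p q (Ne.symm hqp) _ _ P.isPGroup' Q.isPGroup') h g hh hg

theorem QuotientGroup.isCyclic_of_isCoatom {M : Subgroup G} [M.Normal] (hM : IsCoatom M) :
    IsCyclic (G ⧸ M) := by
  obtain ⟨g, -, hg⟩ := SetLike.exists_of_lt hM.1.lt_top
  have hsup : M ⊔ zpowers g = ⊤ := hM.2 _ (left_lt_sup.mpr fun h => hg (h (mem_zpowers g)))
  refine isCyclic_iff_exists_zpowers_eq_top.mpr ⟨g, ?_⟩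
  simpa [Subgroup.map_sup, MonoidHom.map_zpowers, map_top_of_surjective _ (mk'_surjective M)]
    using congrArg (Subgroup.map (QuotientGroup.mk' M)) hsup

theorem isSolvable_of_isCoatom_of_normal {M : Subgroup G} [M.Normal] [Group.IsSolvable M]
    (hM : IsCoatom M) : Group.IsSolvable G := by
  have := QuotientGroup.isCyclic_of_isCoatom hM
  exact Group.isSolvable_of_ker_le_range M.subtype (QuotientGroup.mk' M)
    (by rw [QuotientGroup.ker_mk', range_subtype])

/-- `M` acts by conjugation on the Sylow `q`-subgroups of `K`, whose number divides `|K|`; as `M`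
is a `p`-group and `p ∤ |K|`, this action has a fixed point. -/
theorem exists_sylow_le_normalizer [Finite G] {p q : ℕ} [Fact p.Prime] [Fact q.Prime]
    {K M : Subgroup G} [K.Normal] (hM : IsPGroup p M) (hK : ¬ p ∣ Nat.card K) :
    ∃ Q : Sylow q K, M ≤ normalizer ((Q : Subgroup K).map K.subtype : Set G) := by
  let _ : MulAction M (Sylow q K) :=
    MulAction.compHom _ ((MulAut.conjNormal (H := K)).comp M.subtype)
  obtain ⟨Q₀⟩ : Nonempty (Sylow q K) := inferInstance
  obtain ⟨Q, hQ⟩ := hM.nonempty_fixed_point_of_prime_not_dvd_card (Sylow q K)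
    fun h => hK (h.trans (Q₀.card_dvd_index.trans (index_dvd_card _)))
  refine ⟨Q, fun m hm => mem_normalizer_iff_map_conj_eq.mpr ?_⟩
  have hconj : (MulAut.conj m : G →* G).comp K.subtype =
      K.subtype.comp ((MulAut.conjNormal (H := K) m : K ≃* K) : K →* K) := by
    ext k; simp [MulAut.conjNormal_apply]
  have hfix : (Q : Subgroup K).map ((MulAut.conjNormal (H := K) m : K ≃* K) : K →* K) = Q :=
    congrArg Sylow.toSubgroup (hQ ⟨m, hm⟩)
  rw [map_map, hconj, ← map_map, hfix]

theorem exists_isPGroup_of_isComplement'_of_isCoatom [Finite G] {p : ℕ} [Fact p.Prime]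
    {K M : Subgroup G} [K.Normal] (hKM : IsComplement' K M) (hM : IsCoatom M)
    (hMp : IsPGroup p M) (hK : ¬ p ∣ Nat.card K) : ∃ q : ℕ, q.Prime ∧ IsPGroup q K := by
  rcases eq_or_ne K ⊥ with rfl | hK₁
  · exact ⟨p, Fact.out, IsPGroup.of_bot⟩
  obtain ⟨q, hq, hqK⟩ := Nat.exists_prime_and_dvd fun h => hK₁ (card_eq_one.mp h)
  have : Fact q.Prime := ⟨hq⟩
  obtain ⟨Q, hMQ⟩ := exists_sylow_le_normalizer (q := q) hMp hK
  set Q' := (Q : Subgroup K).map K.subtype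
  have hQ'K : Q' ≤ K := map_subtype_le _
  have hQ'M : ¬ Q' ≤ M := fun h => Q.ne_bot_of_dvd_card hqK <|
    (map_eq_bot_iff_of_injective _ K.subtype_injective).mp (le_bot_iff.mp (hKM.disjoint hQ'K h))
  have hsup : Q' ⊔ M = ⊤ := hM.2 _ (right_lt_sup.mpr hQ'M)
  have hcard : Nat.card K * Nat.card M ≤ Nat.card Q' * Nat.card M := by
    rw [hKM.card_mul_card, ← card_top (G := G), ← hsup]
    exact card_sup_le_of_le_normalizer hMQ
  have hQ'K : Q' = K := eq_of_le_of_card_ge hQ'K (Nat.le_of_mul_le_mul_right hcard Nat.card_pos)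
  exact ⟨q, hq, hQ'K ▸ Q.isPGroup'.map K.subtype⟩

theorem isSolvable_of_isCoatom_of_isPGroup [Finite G] {p : ℕ} [Fact p.Prime] {M : Subgroup G}
    (hM : IsCoatom M) (hMp : IsPGroup p M) [IsMulCommutative M] : Group.IsSolvable G := by
  obtain ⟨P, hMP⟩ := hMp.exists_le_sylow
  rcases hM.le_iff.mp hMP with hP | hP
  · have : Group.IsNilpotent G := ((hP ▸ P.isPGroup').of_equiv topEquiv).isNilpotent
    infer_instance
  subst hP
  rcases hM.le_iff.mp le_normalizer with hN | hN
  · have : (P : Subgroup G).Normal := normalizer_eq_top_iff.mp hN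
    exact isSolvable_of_isCoatom_of_normal hM
  have hPcent : normalizer (P : Set G) ≤ centralizer (P : Set G) := by
    rw [← P.coe_coe, hN]; exact le_centralizer _
  set K := (MonoidHom.transferSylow P hPcent).ker
  have hKP : IsComplement' K P := MonoidHom.ker_transferSylow_isComplement' P hPcent
  obtain ⟨q, hq, hKq⟩ := exists_isPGroup_of_isComplement'_of_isCoatom hKP hM hMp
    (hKP.index_eq_card ▸ P.not_dvd_index)
  have : Fact q.Prime := ⟨hq⟩
  have : Group.IsNilpotent K := hKq.isNilpotent
  exact Group.isSolvable_of_ker_le_range K.subtype (MonoidHom.transferSylow P hPcent)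
    (by rw [range_subtype])

end GroupTheory

section Nilpotentizer

variable {G : Type*} [Group G]

theorem isNilpotent_closure_pair_of_commute {x y : G} (h : Commute x y) :
    Group.IsNilpotent (closure ({x, y} : Set G)) := by
  have := isMulCommutative_closure (k := ({x, y} : Set G)) <| by
    rintro a (rfl | rfl) b (rfl | rfl)
    exacts [rfl, h, h.symm, rfl]
  infer_instance

theorem mem_nilpotentizer_of_commute {x y : G} (h : Commute x y) : y ∈ nilpotentizer x :=
  isNilpotent_closure_pair_of_commute h

theorem subset_nilpotentizer {x : G} {H : Subgroup G} [Group.IsNilpotent H] (hx : x ∈ H) :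
    (H : Set G) ⊆ nilpotentizer x := fun _ hy =>
  isNilpotent_of_le_s10 ((closure_le H).mpr (Set.insert_subset hx (Set.singleton_subset_iff.mpr hy)))

theorem mem_nilpotentizer_of_mem_closure_pair {x y z : G} (hy : y ∈ nilpotentizer x)
    (hz : z ∈ closure ({x, y} : Set G)) : z ∈ nilpotentizer x :=
  have : Group.IsNilpotent (closure ({x, y} : Set G)) := hy
  subset_nilpotentizer (subset_closure (Set.mem_insert x {y})) hz

theorem mul_mem_nilpotentizer {x y z : G} (hy : y ∈ nilpotentizer x) (hz : z ∈ zpowers x) :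
    y * z ∈ nilpotentizer x := by
  refine mem_nilpotentizer_of_mem_closure_pair hy (mul_mem ?_ ?_)
  · exact subset_closure (Set.mem_insert_of_mem x rfl)
  · exact zpowers_le.mpr (subset_closure (Set.mem_insert x {y})) hz

theorem orderOf_dvd_card_nilpotentizer (x : G) : orderOf x ∣ Nat.card (nilpotentizer x) :=
  Nat.card_zpowers x ▸ (zpowers x).card_dvd_natCard_of_mul_mem fun _ hy _ hz =>
    mul_mem_nilpotentizer hy hz

theorem nilpotentizer_eq_centralizer [Finite G] {p : ℕ} [Fact p.Prime] {x : G}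
    (hx : IsPGroup p (zpowers x)) (hcomm : ∀ P : Sylow p G, IsMulCommutative P) :
    nilpotentizer x = centralizer {x} := by
  ext y
  refine ⟨fun hy => ?_, fun hy =>
    mem_nilpotentizer_of_commute (mem_centralizer_singleton_iff.mp hy).symm⟩
  set H := closure ({x, y} : Set G)
  have : Group.IsNilpotent H := hy
  have hxH : x ∈ H := subset_closure (Set.mem_insert x {y})
  have hyH : y ∈ H := subset_closure (Set.mem_insert_of_mem x rfl)
  obtain ⟨S, hxS⟩ := (hx.comap_subtype (K := H)).exists_le_sylow
  obtain ⟨P, hSP⟩ := (S.isPGroup'.map H.subtype).exists_le_sylow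
  have : IsMulCommutative S := ⟨⟨fun a b => Subtype.ext <| Subtype.ext <|
    setLike_mul_comm (s := (P : Subgroup G)) (hSP ⟨a, a.2, rfl⟩) (hSP ⟨b, b.2, rfl⟩)⟩⟩
  have hxZ : (⟨x, hxH⟩ : H) ∈ center H := S.le_center_of_isNilpotent (hxS (mem_zpowers x))
  exact mem_centralizer_singleton_iff.mpr (congrArg Subtype.val (mem_center_iff.mp hxZ ⟨y, hyH⟩))

theorem card_nilpotentizer_ne_prime_pow [Finite G] (hG : ¬ Group.IsSolvable G) {x : G}
    (hmax : IsCoatom (closure (nilpotentizer x))) {p k : ℕ} [hp : Fact p.Prime] (hk : k ≤ 2) :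
    Nat.card (nilpotentizer x) ≠ p ^ k := by
  intro hcard
  obtain ⟨i, -, hi⟩ := (Nat.dvd_prime_pow hp.out).mp (hcard ▸ orderOf_dvd_card_nilpotentizer x)
  have hx : IsPGroup p (zpowers x) := IsPGroup.of_card (by rw [Nat.card_zpowers, hi])
  obtain ⟨P, hxP⟩ := hx.exists_le_sylow
  have : Group.IsNilpotent P := P.isPGroup'.isNilpotent
  have hPx : (P : Set G) ⊆ nilpotentizer x := subset_nilpotentizer (hxP (mem_zpowers x))
  have hPcard : Nat.card P = p ^ (Nat.card G).factorization p := P.card_eq_multiplicity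
  have hPk : (Nat.card G).factorization p ≤ k := by
    rw [← Nat.pow_le_pow_iff_right hp.out.one_lt, ← hPcard, ← hcard]
    exact Nat.card_mono (Set.toFinite _) hPx
  rcases hPk.eq_or_lt with hPk | hPk
  · have : IsMulCommutative P := isMulCommutative_of_card_eq_prime_pow_of_le_two hPcard (hPk ▸ hk)
    have hPeq : ((P : Subgroup G) : Set G) = nilpotentizer x := Set.eq_of_subset_of_ncard_le hPx
      (by rw [← Nat.card_coe_set_eq, ← Nat.card_coe_set_eq, hcard, ← hPk]; exact hPcard.ge)
      (Set.toFinite _)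
    rw [← hPeq, closure_eq] at hmax
    exact hG (isSolvable_of_isCoatom_of_isPGroup hmax P.isPGroup')
  · have hcomm (Q : Sylow p G) : IsMulCommutative Q :=
      isMulCommutative_of_card_eq_prime_pow_of_le_two Q.card_eq_multiplicity (by omega)
    have hC : Nat.card (centralizer {x}) = p ^ k := by
      rwa [nilpotentizer_eq_centralizer hx hcomm] at hcard
    obtain ⟨Q, hCQ⟩ := (IsPGroup.of_card hC).exists_le_sylow
    have hle := card_le_of_le hCQ
    rw [hC, Q.card_eq_multiplicity, Nat.pow_le_pow_iff_right hp.out.one_lt] at hle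
    omega

end Nilpotentizer

theorem stmt_10 {G : Type*} [Group G] [Finite G] (hG : ¬ IsSolvable G) (x : G)
    (hmax : IsCoatom (Subgroup.closure (nilpotentizer x))) :
    ∀ p : ℕ, p.Prime → Nat.card (nilpotentizer x) ≠ p ∧ Nat.card (nilpotentizer x) ≠ p ^ 2 := by
  intro p hp
  have : Fact p.Prime := ⟨hp⟩
  exact ⟨pow_one p ▸ card_nilpotentizer_ne_prime_pow hG hmax (k := 1) (by norm_num),
    card_nilpotentizer_ne_prime_pow hG hmax le_rfl⟩
end

section
/- Let G be a finite group and let x ∈ G have prime order p. If the cardinality of nil_G(x) is at most p², then nil_G(x) = C_G(x), the centralizer of x in G. -/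
open Subgroup Group

theorem IsPGroup.isMulCommutative_of_card_le_prime_sq {K : Type*} [Group K] [Finite K] {p : ℕ}
    [Fact p.Prime] (hK : IsPGroup p K) (hcard : Nat.card K ≤ p ^ 2) : IsMulCommutative K := by
  obtain ⟨k, hk⟩ := IsPGroup.iff_card.mp hK
  have hk2 : k ≤ 2 := (Nat.pow_le_pow_iff_right (Fact.out : p.Prime).one_lt).mp (hk ▸ hcard)
  obtain hk1 | rfl : k ≤ 1 ∨ k = 2 := by omega
  · have : IsCyclic K :=
      isCyclic_of_card_dvd_prime (hk ▸ (pow_dvd_pow p hk1).trans (pow_one p).dvd)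
    infer_instance
  · exact IsPGroup.isMulCommutative_of_card_eq_prime_sq hk

section

variable {G : Type*} [Group G] [Finite G]

theorem Subgroup.eq_top_of_forall_sylow_le (H : Subgroup G)
    (h : ∀ (p : ℕ) [Fact p.Prime] (P : Sylow p G), (P : Subgroup G) ≤ H) : H = ⊤ := by
  refine H.eq_top_of_le_card (Nat.le_of_dvd Nat.card_pos ?_)
  refine (Nat.dvd_iff_prime_pow_dvd_dvd _ _).mpr fun p k hp hpk => ?_
  have : Fact p.Prime := ⟨hp⟩
  obtain ⟨P⟩ : Nonempty (Sylow p G) := inferInstance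
  exact (P.pow_dvd_card_of_pow_dvd_card hpk).trans (card_dvd_of_le (h p P))

theorem Sylow.commute_of_ne [IsNilpotent G] {p q : ℕ} [Fact p.Prime] [Fact q.Prime]
    (hpq : p ≠ q) (P : Sylow p G) (Q : Sylow q G) {a b : G} (ha : a ∈ P) (hb : b ∈ Q) :
    Commute a b :=
  commute_of_normal_of_disjoint _ _ inferInstance inferInstance
    (IsPGroup.disjoint_of_ne p q hpq _ _ P.isPGroup' Q.isPGroup') a b ha hb

theorem Sylow.mem_center_of_mem [IsNilpotent G] {p : ℕ} [Fact p.Prime] (P : Sylow p G)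
    [IsMulCommutative P] {a : G} (ha : a ∈ P) : a ∈ center G := by
  suffices centralizer {a} = ⊤ from
    mem_center_iff.mpr fun b => mem_centralizer_singleton_iff.mp (this ▸ mem_top b)
  refine eq_top_of_forall_sylow_le _ fun q _ Q b hb => mem_centralizer_singleton_iff.mpr ?_
  by_cases hqp : q = p
  · subst hqp
    have := Sylow.unique_of_normal P inferInstance
    rw [Subsingleton.elim Q P] at hb
    exact congrArg Subtype.val (mul_comm' (⟨b, hb⟩ : P) ⟨a, ha⟩)
  · exact (Sylow.commute_of_ne hqp Q P hb ha).eq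

theorem mem_center_of_card_le_prime_sq [IsNilpotent G] {p n : ℕ} [Fact p.Prime]
    (hG : Nat.card G ≤ p ^ 2) {a : G} (ha : orderOf a = p ^ n) : a ∈ center G := by
  have hpa : IsPGroup p (zpowers a) := .of_card (by rw [Nat.card_zpowers, ha])
  obtain ⟨P, haP⟩ := hpa.exists_le_sylow
  have := P.isPGroup'.isMulCommutative_of_card_le_prime_sq ((card_le_card_group _).trans hG)
  exact P.mem_center_of_mem (haP (mem_zpowers a))

end

section

variable {G : Type*} [Group G]

theorem closure_pair_subset_nilpotentizer {x y : G} (hy : y ∈ nilpotentizer x) :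
    (closure {x, y} : Set G) ⊆ nilpotentizer x := by
  have : IsNilpotent (closure ({x, y} : Set G)) := hy
  intro z hz
  have hle : closure {x, z} ≤ closure {x, y} :=
    closure_le _ |>.mpr <|
      Set.insert_subset (subset_closure (Set.mem_insert x _)) (Set.singleton_subset_iff.mpr hz)
  exact Group.nilpotent_of_mulEquiv (subgroupOfEquivOfLe hle)

open scoped IsMulCommutative in
theorem centralizer_subset_nilpotentizer (x : G) :
    (centralizer {x} : Set G) ⊆ nilpotentizer x := by
  intro y hy
  have hxy : y * x = x * y := mem_centralizer_singleton_iff.mp hy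
  have : IsMulCommutative (closure ({x, y} : Set G)) := isMulCommutative_closure (by
    rintro a (rfl | rfl) b (rfl | rfl) <;> first | rfl | exact hxy | exact hxy.symm)
  show IsNilpotent (closure ({x, y} : Set G))
  infer_instance

end

theorem stmt_14 {G : Type*} [Group G] [Finite G] (x : G) (p : ℕ) (hp : p.Prime)
    (ho : orderOf x = p) (hcard : Nat.card (nilpotentizer x) ≤ p ^ 2) :
    nilpotentizer x = ((Subgroup.centralizer {x} : Subgroup G) : Set G) := by
  have : Fact p.Prime := ⟨hp⟩
  refine subset_antisymm (fun y hy => ?_) (centralizer_subset_nilpotentizer x)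
  set H := closure ({x, y} : Set G)
  have : IsNilpotent H := hy
  have hxH : x ∈ H := subset_closure (Set.mem_insert x _)
  have hyH : y ∈ H := subset_closure (Set.mem_insert_of_mem x rfl)
  have hsub := closure_pair_subset_nilpotentizer hy
  have hH : Nat.card H ≤ p ^ 2 :=
    (Nat.card_le_card_of_injective _ (Set.inclusion_injective hsub)).trans hcard
  have hx : (⟨x, hxH⟩ : H) ∈ center H :=
    mem_center_of_card_le_prime_sq hH (n := 1) (by rw [orderOf_mk, ho, pow_one])
  exact mem_centralizer_singleton_iff.mpr (congrArg Subtype.val (mem_center_iff.mp hx ⟨y, hyH⟩))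
end
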